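/- arXiv:1808.06961 — 3 statements merged into one kernel-verified Lean document; each statement's English description precedes it below -/
import Mathlib

section
/- Under the null-hypothesis model, the expected spread of experiment E1 is zero: for every ranking distribution r on the permutations of Fin n and every pair of distinct objects a ≠ b, if σ₁, σ₂, σ₃ are independent samples from r, then the expectation of the object-based spread (σ₁(c) − σ₃(c)) + (σ₃(d) − σ₁(d)) — where c = a if σ₂(a) < σ₂(b) and c = b otherwise, and d is the non-chosen object — equals 0. Equivalently, ∑_{σ₁,σ₂,σ₃ ∈ S_n} r(σ₁)·r(σ₂)·r(σ₃)·spread(σ₁,σ₂,σ₃) = 0. -/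
/-! Exchanging the stage-one and stage-three rankings negates the spread, while the weight
`r σ₁ * r σ₂ * r σ₃` is symmetric in them; so the weighted sum equals its own negative. -/

/-- Object-based spread: given distinct comparison objects `a`, `b`, the subject
chooses `c = a` if `σ₂ a < σ₂ b` and `c = b` otherwise (with `d` the other object);
the spread is the amount the chosen object's rank improves plus the amount the
rejected object's rank worsens between the stage-one and stage-three rankings. -/
def objSpread {n : ℕ} (a b : Fin n) (σ₁ σ₂ σ₃ : Equiv.Perm (Fin n)) : ℤ :=
  let c := if σ₂ a < σ₂ b then a else b
  let d := if σ₂ a < σ₂ b then b else a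
  (((σ₁ c).val : ℤ) - ((σ₃ c).val : ℤ)) + (((σ₃ d).val : ℤ) - ((σ₁ d).val : ℤ))

theorem Finset.sum_sum_eq_zero_of_antisymm {ι G : Type*} [Fintype ι] [AddCommGroup G]
    [IsAddTorsionFree G] (f : ι → ι → G) (hf : ∀ i j, f j i = -f i j) :
    ∑ i, ∑ j, f i j = 0 :=
  self_eq_neg.mp <| calc
    ∑ i, ∑ j, f i j = ∑ j, ∑ i, f i j := Finset.sum_comm
    _ = ∑ j, ∑ i, -f j i :=
      Finset.sum_congr rfl fun j _ => Finset.sum_congr rfl fun i _ => hf j i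
    _ = -∑ i, ∑ j, f i j := by simp only [Finset.sum_neg_distrib]

theorem objSpread_swap {n : ℕ} (a b : Fin n) (σ₁ σ₂ σ₃ : Equiv.Perm (Fin n)) :
    objSpread a b σ₃ σ₂ σ₁ = -objSpread a b σ₁ σ₂ σ₃ := by
  simp only [objSpread]
  ring

theorem expected_spread_E1_eq_zero_general (n : ℕ) (r : Equiv.Perm (Fin n) → ℝ)
    (a b : Fin n) :
    ∑ σ₁ : Equiv.Perm (Fin n), ∑ σ₂ : Equiv.Perm (Fin n), ∑ σ₃ : Equiv.Perm (Fin n),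
      r σ₁ * r σ₂ * r σ₃ * ((objSpread a b σ₁ σ₂ σ₃ : ℤ) : ℝ) = 0 := by
  rw [Finset.sum_comm]
  refine Finset.sum_eq_zero fun σ₂ _ => Finset.sum_sum_eq_zero_of_antisymm _ fun σ₁ σ₃ => ?_
  rw [objSpread_swap]
  push_cast
  ring

/-- Under the null-hypothesis model, the expected spread of experiment E1
(fixed pre-selected pair of comparison objects) is zero. -/
theorem expected_spread_E1_eq_zero (n : ℕ) (r : Equiv.Perm (Fin n) → ℝ)
    (hr_nonneg : ∀ σ, 0 ≤ r σ) (hr_sum : ∑ σ : Equiv.Perm (Fin n), r σ = 1)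
    (a b : Fin n) (hab : a ≠ b) :
    ∑ σ₁ : Equiv.Perm (Fin n), ∑ σ₂ : Equiv.Perm (Fin n), ∑ σ₃ : Equiv.Perm (Fin n),
      r σ₁ * r σ₂ * r σ₃ * ((objSpread a b σ₁ σ₂ σ₃ : ℤ) : ℝ) = 0 :=
  expected_spread_E1_eq_zero_general n r a b
end

section
/- Under the null-hypothesis model, the expected spread of experiment E2 is zero: for every ranking distribution r on the permutations of Fin n (n ≥ 2), if σ₁, σ₂, σ₃ are independent samples from r and the pair of comparison positions {i, j} (with i < j) is chosen uniformly at random from all n(n−1)/2 unordered pairs of positions, independently of (σ₁, σ₂, σ₃), then the expectation of the position-based spread is zero. Equivalently, (2/(n(n−1))) · ∑_{1 ≤ i < j ≤ n} ∑_{σ₁,σ₂,σ₃} r(σ₁)·r(σ₂)·r(σ₃)·spread_{i,j}(σ₁,σ₂,σ₃) = 0. -/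
/-- Position-based spread: given comparison positions `i`, `j`, the comparison
objects are `a = σ₁⁻¹ i` and `b = σ₁⁻¹ j`; the subject chooses whichever of
`a`, `b` is ranked better (lower) by `σ₂`, and the spread is the amount the
chosen object's rank improves plus the amount the rejected object's rank
worsens between the stage-one ranking `σ₁` and the stage-three ranking `σ₃`. -/
def posSpread {n : ℕ} (i j : Fin n) (σ₁ σ₂ σ₃ : Equiv.Perm (Fin n)) : ℤ :=
  let a := σ₁⁻¹ i
  let b := σ₁⁻¹ j
  let c := if σ₂ a < σ₂ b then a else b
  let d := if σ₂ a < σ₂ b then b else a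
  (((σ₁ c).val : ℤ) - ((σ₃ c).val : ℤ)) + (((σ₃ d).val : ℤ) - ((σ₁ d).val : ℤ))

/-!
Reindexing the positions `i < j` through `σ₁⁻¹` turns the sum over pairs of positions into a sum
over unordered pairs of objects `{a, b}`. On a fixed pair of objects the spread is
`g c - g d` with `g x = σ₁ x - σ₃ x`, so it changes sign when `σ₁` and `σ₃` are exchanged, while
the weight `r σ₁ * r σ₂ * r σ₃` does not. Hence the expected spread equals its own negative.
-/

open Finset

theorem Finset.sum_filter_lt_eq_sum_sym2 {α M : Type*} [Fintype α] [LinearOrder α]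
    [AddCommMonoid M] (f : Sym2 α → M) :
    ∑ p : α × α with p.1 < p.2, f s(p.1, p.2) =
      ∑ z ∈ (univ : Finset α).sym2 with ¬ z.IsDiag, f z := by
  rw [sum_sym2_filter_not_isDiag]
  congr 1
  ext p
  simpa using ne_of_lt

theorem Finset.sum_filter_lt_comp_perm {α M : Type*} [Fintype α] [LinearOrder α]
    [AddCommMonoid M] (F : α → α → M) (hF : ∀ a b, F a b = F b a) (π : Equiv.Perm α) :
    ∑ p : α × α with p.1 < p.2, F (π p.1) (π p.2) = ∑ p : α × α with p.1 < p.2, F p.1 p.2 := by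
  let f : Sym2 α → M := Sym2.lift ⟨F, hF⟩
  calc ∑ p : α × α with p.1 < p.2, F (π p.1) (π p.2)
      = ∑ z ∈ (univ : Finset α).sym2 with ¬ z.IsDiag, f (z.map π) :=
        sum_filter_lt_eq_sum_sym2 (f ∘ Sym2.map π)
    _ = ∑ z ∈ (univ : Finset α).sym2 with ¬ z.IsDiag, f z := by
        refine sum_nbij' (Sym2.map π) (Sym2.map π.symm) ?_ ?_ ?_ ?_ (fun _ _ => rfl) <;>
          simp [Sym2.map_map, Sym2.isDiag_map π.injective, Sym2.isDiag_map π.symm.injective]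
    _ = ∑ p : α × α with p.1 < p.2, F p.1 p.2 := (sum_filter_lt_eq_sum_sym2 f).symm

theorem Finset.sum_sum_sum_eq_zero_of_antisymm {α β M : Type*} [Fintype α] [Fintype β]
    [AddCommGroup M] [IsAddTorsionFree M] (f : α → β → α → M) (hf : ∀ x y z, f z y x = -f x y z) :
    ∑ x, ∑ y, ∑ z, f x y z = 0 := by
  refine self_eq_neg.mp ?_
  calc ∑ x, ∑ y, ∑ z, f x y z
      = ∑ y, ∑ x, ∑ z, f x y z := sum_comm
    _ = ∑ y, ∑ z, ∑ x, f x y z := sum_congr rfl fun _ _ => sum_comm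
    _ = ∑ z, ∑ y, ∑ x, f x y z := sum_comm
    _ = ∑ z, ∑ y, ∑ x, -f z y x :=
        sum_congr rfl fun z _ => sum_congr rfl fun y _ => sum_congr rfl fun x _ => hf z y x
    _ = -∑ x, ∑ y, ∑ z, f x y z := by simp only [sum_neg_distrib]

section Spread

variable {n : ℕ}

def rankGain (σ₁ σ₃ : Equiv.Perm (Fin n)) (x : Fin n) : ℤ := (σ₁ x : ℤ) - σ₃ x

def objectSpread (a b : Fin n) (σ₁ σ₂ σ₃ : Equiv.Perm (Fin n)) : ℤ :=
  if σ₂ a < σ₂ b then rankGain σ₁ σ₃ a - rankGain σ₁ σ₃ b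
  else rankGain σ₁ σ₃ b - rankGain σ₁ σ₃ a

theorem posSpread_eq_objectSpread (i j : Fin n) (σ₁ σ₂ σ₃ : Equiv.Perm (Fin n)) :
    posSpread i j σ₁ σ₂ σ₃ = objectSpread (σ₁⁻¹ i) (σ₁⁻¹ j) σ₁ σ₂ σ₃ := by
  by_cases h : σ₂ (σ₁⁻¹ i) < σ₂ (σ₁⁻¹ j) <;>
    simp only [posSpread, objectSpread, rankGain, h, if_true, if_false] <;> ring

theorem objectSpread_comm (a b : Fin n) (σ₁ σ₂ σ₃ : Equiv.Perm (Fin n)) :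
    objectSpread a b σ₁ σ₂ σ₃ = objectSpread b a σ₁ σ₂ σ₃ := by
  rcases lt_trichotomy (σ₂ a) (σ₂ b) with h | h | h
  · simp [objectSpread, h, h.not_gt]
  · rw [σ₂.injective h]
  · simp [objectSpread, h, h.not_gt]

theorem objectSpread_swap (a b : Fin n) (σ₁ σ₂ σ₃ : Equiv.Perm (Fin n)) :
    objectSpread a b σ₃ σ₂ σ₁ = -objectSpread a b σ₁ σ₂ σ₃ := by
  unfold objectSpread rankGain
  split_ifs <;> ring

theorem sum_posSpread_eq_sum_objectSpread (σ₁ σ₂ σ₃ : Equiv.Perm (Fin n)) :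
    ∑ p : Fin n × Fin n with p.1 < p.2, posSpread p.1 p.2 σ₁ σ₂ σ₃ =
      ∑ p : Fin n × Fin n with p.1 < p.2, objectSpread p.1 p.2 σ₁ σ₂ σ₃ := by
  simp only [posSpread_eq_objectSpread]
  exact sum_filter_lt_comp_perm (fun a b => objectSpread a b σ₁ σ₂ σ₃)
    (fun a b => objectSpread_comm a b σ₁ σ₂ σ₃) σ₁⁻¹

theorem sum_posSpread_swap (σ₁ σ₂ σ₃ : Equiv.Perm (Fin n)) :
    ∑ p : Fin n × Fin n with p.1 < p.2, posSpread p.1 p.2 σ₃ σ₂ σ₁ =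
      -∑ p : Fin n × Fin n with p.1 < p.2, posSpread p.1 p.2 σ₁ σ₂ σ₃ := by
  rw [sum_posSpread_eq_sum_objectSpread, sum_posSpread_eq_sum_objectSpread, ← sum_neg_distrib]
  exact sum_congr rfl fun p _ => objectSpread_swap p.1 p.2 σ₁ σ₂ σ₃

end Spread

theorem expected_spread_E2_eq_zero_general (n : ℕ)
    (r : Equiv.Perm (Fin n) → ℝ) :
    (2 / ((n : ℝ) * ((n : ℝ) - 1))) *
      ∑ p ∈ Finset.univ.filter (fun p : Fin n × Fin n => p.1 < p.2),
        ∑ σ₁ : Equiv.Perm (Fin n), ∑ σ₂ : Equiv.Perm (Fin n), ∑ σ₃ : Equiv.Perm (Fin n),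
          r σ₁ * r σ₂ * r σ₃ * ((posSpread p.1 p.2 σ₁ σ₂ σ₃ : ℤ) : ℝ) = 0 := by
  refine mul_eq_zero_of_right _ ?_
  calc _ = ∑ σ₁, ∑ σ₂, ∑ σ₃, r σ₁ * r σ₂ * r σ₃ *
          ((∑ p : Fin n × Fin n with p.1 < p.2, posSpread p.1 p.2 σ₁ σ₂ σ₃ : ℤ) : ℝ) := by
        simp only [Int.cast_sum, mul_sum]
        exact sum_comm.trans (sum_congr rfl fun _ _ => sum_comm.trans
          (sum_congr rfl fun _ _ => sum_comm))
    _ = 0 := sum_sum_sum_eq_zero_of_antisymm _ fun σ₁ σ₂ σ₃ => by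
        rw [sum_posSpread_swap, Int.cast_neg]
        ring

/-- Under the null-hypothesis model, the expected spread of experiment E2
(comparison positions chosen uniformly at random, independently of the
rankings) is zero. -/
theorem expected_spread_E2_eq_zero (n : ℕ) (hn : 2 ≤ n)
    (r : Equiv.Perm (Fin n) → ℝ)
    (hr_nonneg : ∀ σ, 0 ≤ r σ) (hr_sum : ∑ σ : Equiv.Perm (Fin n), r σ = 1) :
    (2 / ((n : ℝ) * ((n : ℝ) - 1))) *
      ∑ p ∈ Finset.univ.filter (fun p : Fin n × Fin n => p.1 < p.2),
        ∑ σ₁ : Equiv.Perm (Fin n), ∑ σ₂ : Equiv.Perm (Fin n), ∑ σ₃ : Equiv.Perm (Fin n),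
          r σ₁ * r σ₂ * r σ₃ * ((posSpread p.1 p.2 σ₁ σ₂ σ₃ : ℤ) : ℝ) = 0 :=
  expected_spread_E2_eq_zero_general n r
end

section
/- Under the null-hypothesis model, the expected average spread of experiment E3 is zero: let n ≥ 2, let m = n(n−1)/2, let e : Fin m → {unordered pairs {i,j} of distinct positions in Fin n} be a bijection enumerating all comparison-position pairs, and let each subject k ∈ Fin m have its own ranking distribution r_k on the permutations of Fin n. Suppose subjects are assigned to pairs by a uniformly random permutation π of Fin m, and subject k's three rankings σ₁, σ₂, σ₃ are independent samples from r_k, with subject k's spread computed at the pair e(π(k)). Then the expected average spread, (1/m!) · ∑_{π ∈ S_m} (1/m) · ∑_{k} E_{r_k}[spread_{e(π(k))}(σ₁,σ₂,σ₃)], equals zero. -/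
/-! For fixed rankings, summing the spread over all position pairs amounts, through `σ₁`, to
summing over all pairs of objects the rank shift `σ₁ - σ₃` of the object preferred by `σ₂` minus
that of the other. This total changes sign when `σ₁` and `σ₃` are exchanged, while the weight
`r σ₁ * r σ₂ * r σ₃` does not, so every subject's spread, summed over all pairs, has expectation
zero. A uniformly random assignment gives each subject every pair equally often, so the average
spread is a multiple of these vanishing sums. -/

theorem Fintype.sum_subtype_lt_add_swap {α M : Type*} [Fintype α] [LinearOrder α]
    [AddCommMonoid M] (H : α → α → M) (hH : ∀ a, H a a = 0) :
    ∑ q : {p : α × α // p.1 < p.2}, (H q.1.1 q.1.2 + H q.1.2 q.1.1) = ∑ a, ∑ b, H a b := by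
  have htrichotomy : ∀ p : α × α,
      (if p.1 < p.2 then H p.1 p.2 else 0) + (if p.2 < p.1 then H p.1 p.2 else 0) = H p.1 p.2 := by
    rintro ⟨a, b⟩
    rcases lt_trichotomy a b with h | rfl | h
    · simp [h, h.not_gt]
    · simp [hH]
    · simp [h, h.not_gt]
  have hswap : ∑ p : α × α, (if p.1 < p.2 then H p.2 p.1 else 0)
      = ∑ p : α × α, (if p.2 < p.1 then H p.1 p.2 else 0) :=
    Fintype.sum_equiv (Equiv.prodComm α α) _ _ fun _ => rfl
  calc ∑ q : {p : α × α // p.1 < p.2}, (H q.1.1 q.1.2 + H q.1.2 q.1.1)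
      = ∑ p : α × α, if p.1 < p.2 then H p.1 p.2 + H p.2 p.1 else 0 := by
        rw [← Finset.sum_filter]
        exact (Finset.sum_subtype {p : α × α | p.1 < p.2} (by simp)
          fun p => H p.1 p.2 + H p.2 p.1).symm
    _ = ∑ p : α × α, (if p.1 < p.2 then H p.1 p.2 else 0)
          + ∑ p : α × α, (if p.1 < p.2 then H p.2 p.1 else 0) := by
        simp only [ite_add_zero, Finset.sum_add_distrib]
    _ = ∑ p : α × α, H p.1 p.2 := by
        rw [hswap, ← Finset.sum_add_distrib]
        exact Finset.sum_congr rfl fun p _ => htrichotomy p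
    _ = ∑ a, ∑ b, H a b := Fintype.sum_prod_type' H

section Spread

variable {n : ℕ} (σ₁ σ₂ σ₃ : Equiv.Perm (Fin n))

def choiceGain (a b : Fin n) : ℤ :=
  if σ₂ a < σ₂ b then ((σ₁ a : ℤ) - σ₃ a) - ((σ₁ b : ℤ) - σ₃ b) else 0

theorem choiceGain_self (a : Fin n) : choiceGain σ₁ σ₂ σ₃ a a = 0 := by
  simp [choiceGain]

theorem choiceGain_swap_outer (a b : Fin n) :
    choiceGain σ₃ σ₂ σ₁ a b = -choiceGain σ₁ σ₂ σ₃ a b := by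
  unfold choiceGain
  split_ifs <;> ring

theorem posSpread_eq_choiceGain_add (i j : Fin n) :
    posSpread i j σ₁ σ₂ σ₃
      = choiceGain σ₁ σ₂ σ₃ (σ₁⁻¹ i) (σ₁⁻¹ j) + choiceGain σ₁ σ₂ σ₃ (σ₁⁻¹ j) (σ₁⁻¹ i) := by
  unfold posSpread choiceGain
  rcases lt_trichotomy (σ₂ (σ₁⁻¹ i)) (σ₂ (σ₁⁻¹ j)) with h | h | h
  · simp only [h, h.not_gt, if_true, if_false]
    ring
  · obtain rfl : i = j := by simpa using h
    simp
  · simp only [h, h.not_gt, if_true, if_false]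
    ring

theorem sum_posSpread_eq_sum_choiceGain :
    ∑ q : {p : Fin n × Fin n // p.1 < p.2}, posSpread q.1.1 q.1.2 σ₁ σ₂ σ₃
      = ∑ a, ∑ b, choiceGain σ₁ σ₂ σ₃ a b := by
  simp only [posSpread_eq_choiceGain_add]
  rw [Fintype.sum_subtype_lt_add_swap (fun i j => choiceGain σ₁ σ₂ σ₃ (σ₁⁻¹ i) (σ₁⁻¹ j))
    fun _ => choiceGain_self _ _ _ _]
  rw [Equiv.sum_comp σ₁⁻¹ fun a => ∑ b, choiceGain σ₁ σ₂ σ₃ a (σ₁⁻¹ b)]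
  exact Finset.sum_congr rfl fun a _ => Equiv.sum_comp σ₁⁻¹ (choiceGain σ₁ σ₂ σ₃ a)

theorem sum_posSpread_swap_outer :
    ∑ q : {p : Fin n × Fin n // p.1 < p.2}, posSpread q.1.1 q.1.2 σ₃ σ₂ σ₁
      = -∑ q : {p : Fin n × Fin n // p.1 < p.2}, posSpread q.1.1 q.1.2 σ₁ σ₂ σ₃ := by
  simp only [sum_posSpread_eq_sum_choiceGain, choiceGain_swap_outer σ₁ σ₂ σ₃,
    Finset.sum_neg_distrib]

end Spread

theorem sum_mul_mul_mul_eq_zero_of_antisymm {α β R : Type*} [Fintype α] [Fintype β] [CommRing R]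
    [IsAddTorsionFree R] (u : α → R) (v : β → R) (Φ : α → β → α → R)
    (hΦ : ∀ a b c, Φ c b a = -Φ a b c) :
    ∑ a, ∑ b, ∑ c, u a * v b * u c * Φ a b c = 0 := by
  refine self_eq_neg.mp ?_
  calc ∑ a, ∑ b, ∑ c, u a * v b * u c * Φ a b c
      = ∑ b, ∑ a, ∑ c, u a * v b * u c * Φ a b c := Finset.sum_comm
    _ = ∑ b, ∑ c, ∑ a, u a * v b * u c * Φ a b c :=
        Finset.sum_congr rfl fun _ _ => Finset.sum_comm
    _ = ∑ c, ∑ b, ∑ a, u a * v b * u c * Φ a b c := Finset.sum_comm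
    _ = -∑ a, ∑ b, ∑ c, u a * v b * u c * Φ a b c := by
        simp only [← Finset.sum_neg_distrib]
        refine Finset.sum_congr rfl fun a _ => Finset.sum_congr rfl fun b _ =>
          Finset.sum_congr rfl fun c _ => ?_
        rw [hΦ]
        ring

theorem sum_expected_posSpread_eq_zero {n : ℕ} (w : Equiv.Perm (Fin n) → ℝ) :
    ∑ q : {p : Fin n × Fin n // p.1 < p.2}, ∑ σ₁, ∑ σ₂, ∑ σ₃,
      w σ₁ * w σ₂ * w σ₃ * ((posSpread q.1.1 q.1.2 σ₁ σ₂ σ₃ : ℤ) : ℝ) = 0 := by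
  calc _ = ∑ σ₁, ∑ σ₂, ∑ σ₃, w σ₁ * w σ₂ * w σ₃ *
        ((∑ q : {p : Fin n × Fin n // p.1 < p.2}, posSpread q.1.1 q.1.2 σ₁ σ₂ σ₃ : ℤ) : ℝ) := by
        simp only [Int.cast_sum, Finset.mul_sum]
        exact Finset.sum_comm.trans <| Finset.sum_congr rfl fun _ _ =>
          Finset.sum_comm.trans <| Finset.sum_congr rfl fun _ _ => Finset.sum_comm
    _ = 0 := sum_mul_mul_mul_eq_zero_of_antisymm w w _ fun σ₁ σ₂ σ₃ => by
        rw [sum_posSpread_swap_outer, Int.cast_neg]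

theorem Equiv.Perm.card_smul_sum_apply {α M : Type*} [Fintype α] [DecidableEq α]
    [AddCommMonoid M] (g : α → M) (a : α) :
    Fintype.card α • ∑ π : Equiv.Perm α, g (π a) = (Fintype.card α).factorial • ∑ x, g x := by
  have hindep : ∀ b, ∑ π : Equiv.Perm α, g (π b) = ∑ π : Equiv.Perm α, g (π a) := fun b =>
    Fintype.sum_equiv (Equiv.mulRight (Equiv.swap b a)) _ _ fun π => by simp
  calc Fintype.card α • ∑ π : Equiv.Perm α, g (π a)
      = ∑ b, ∑ π : Equiv.Perm α, g (π b) := by simp [hindep]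
    _ = ∑ π : Equiv.Perm α, ∑ b, g (π b) := Finset.sum_comm
    _ = ∑ _π : Equiv.Perm α, ∑ x, g x := Finset.sum_congr rfl fun π _ => Equiv.sum_comp π g
    _ = (Fintype.card α).factorial • ∑ x, g x := by
        rw [Finset.sum_const, Finset.card_univ, Fintype.card_perm]

theorem expected_average_spread_E3_eq_zero_general (n m : ℕ)
    (e : Fin m ≃ {p : Fin n × Fin n // p.1 < p.2})
    (r : Fin m → Equiv.Perm (Fin n) → ℝ) :
    (1 / (Nat.factorial m : ℝ)) *
      ∑ π : Equiv.Perm (Fin m),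
        (1 / (m : ℝ)) * ∑ k : Fin m,
          ∑ σ₁ : Equiv.Perm (Fin n), ∑ σ₂ : Equiv.Perm (Fin n), ∑ σ₃ : Equiv.Perm (Fin n),
            r k σ₁ * r k σ₂ * r k σ₃ *
              ((posSpread (e (π k)).1.1 (e (π k)).1.2 σ₁ σ₂ σ₃ : ℤ) : ℝ) = 0 := by
  set F : Fin m → Fin m → ℝ := fun k p => ∑ σ₁, ∑ σ₂, ∑ σ₃,
    r k σ₁ * r k σ₂ * r k σ₃ * ((posSpread (e p).1.1 (e p).1.2 σ₁ σ₂ σ₃ : ℤ) : ℝ)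
  have hsubject (k : Fin m) : ∑ p, F k p = 0 :=
    (e.sum_comp _).trans (sum_expected_posSpread_eq_zero (r k))
  have hassigned (k : Fin m) : ∑ π : Equiv.Perm (Fin m), F k (π k) = 0 := by
    have := Equiv.Perm.card_smul_sum_apply (F k) k
    rw [hsubject k, smul_zero, smul_eq_zero] at this
    exact this.resolve_left (by simpa using k.pos.ne')
  show (1 / (m.factorial : ℝ)) * ∑ π : Equiv.Perm (Fin m), (1 / (m : ℝ)) * ∑ k, F k (π k) = 0
  rw [← Finset.mul_sum, Finset.sum_comm, Finset.sum_eq_zero fun k _ => hassigned k, mul_zero,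
    mul_zero]

/-- Under the null-hypothesis model, the expected average spread of experiment
E3 is zero: each of the `m = n(n-1)/2` subjects has its own ranking
distribution `r k`, subjects are assigned to comparison-position pairs
(enumerated by the bijection `e`) by a uniformly random permutation `π` of
`Fin m`, and each subject's three rankings are i.i.d. samples from its own
distribution. -/
theorem expected_average_spread_E3_eq_zero (n m : ℕ) (hn : 2 ≤ n)
    (hm : m = n * (n - 1) / 2)
    (e : Fin m ≃ {p : Fin n × Fin n // p.1 < p.2})
    (r : Fin m → Equiv.Perm (Fin n) → ℝ)
    (hr_nonneg : ∀ k σ, 0 ≤ r k σ)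
    (hr_sum : ∀ k, ∑ σ : Equiv.Perm (Fin n), r k σ = 1) :
    (1 / (Nat.factorial m : ℝ)) *
      ∑ π : Equiv.Perm (Fin m),
        (1 / (m : ℝ)) * ∑ k : Fin m,
          ∑ σ₁ : Equiv.Perm (Fin n), ∑ σ₂ : Equiv.Perm (Fin n), ∑ σ₃ : Equiv.Perm (Fin n),
            r k σ₁ * r k σ₂ * r k σ₃ *
              ((posSpread (e (π k)).1.1 (e (π k)).1.2 σ₁ σ₂ σ₃ : ℤ) : ℝ) = 0 :=
  expected_average_spread_E3_eq_zero_general n m e r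
end
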